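/- In the even orthogonal character ring for n = 3: p̄_3 · oe_{(2,1)} = oe_{(5,1)} - oe_{(3,3)} - oe_{(2,2,2)} - oe_∅ + oe_{(2)}, where p̄_3 = Σ_{i=1}^3 (x_i^3 + x_i^{-3}). -/

import Mathlib

open scoped BigOperators

noncomputable section

/-- An integer partition: a weakly decreasing, eventually zero sequence of naturals. -/
structure IntPartition where
  part : ℕ → ℕ
  antitone : ∀ i j, i ≤ j → part j ≤ part i
  finite : ∃ N, ∀ i, N ≤ i → part i = 0

namespace IntPartition

instance : LE IntPartition := ⟨fun μ ν => ∀ i, μ.part i ≤ ν.part i⟩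

/-- The number of nonzero parts of a partition. -/
def len (μ : IntPartition) : ℕ :=
  Nat.find (p := fun N => μ.part N = 0)
    (by obtain ⟨N, hN⟩ := μ.finite; exact ⟨N, hN N le_rfl⟩)

/-- The size `|μ|` of a partition. -/
def size (μ : IntPartition) : ℕ := ∑ i ∈ Finset.range μ.len, μ.part i

/-- The number of boxes of the skew shape `ν/μ`. -/
def skewSize (ν μ : IntPartition) : ℕ := ν.size - μ.size

/-- One less than the number of nonempty rows of `ν/μ`. -/
def height (μ ν : IntPartition) : ℕ :=
  (((Finset.range ν.len).filter (fun i => μ.part i < ν.part i)).card) - 1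

/-- The set of boxes of the skew diagram `ν/μ` (rows and columns indexed from 0). -/
def cells (μ ν : IntPartition) : Set (ℕ × ℕ) :=
  {c | μ.part c.1 ≤ c.2 ∧ c.2 < ν.part c.1}

/-- Two boxes are adjacent if they share a common side. -/
def Adj (a b : ℕ × ℕ) : Prop :=
  (a.1 = b.1 ∧ (a.2 + 1 = b.2 ∨ b.2 + 1 = a.2)) ∨
  (a.2 = b.2 ∧ (a.1 + 1 = b.1 ∨ b.1 + 1 = a.1))

/-- A set of boxes is connected if any two of its boxes are joined by a path of
adjacent boxes within the set. -/
def ConnectedIn (S : Set (ℕ × ℕ)) : Prop :=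
  ∀ a ∈ S, ∀ b ∈ S,
    Relation.ReflTransGen (fun u v => u ∈ S ∧ v ∈ S ∧ Adj u v) a b

/-- `ν/μ` is a border strip with `r` boxes: connected and with no 2×2 block. -/
def IsBorderStrip (μ ν : IntPartition) (r : ℕ) : Prop :=
  μ ≤ ν ∧ skewSize ν μ = r ∧ ConnectedIn (cells μ ν) ∧
    ∀ i j : ℕ, ¬ ((i, j) ∈ cells μ ν ∧ (i + 1, j) ∈ cells μ ν ∧
      (i, j + 1) ∈ cells μ ν ∧ (i + 1, j + 1) ∈ cells μ ν)

/-- `ν/μ` is a vertical strip with `r` boxes (at most one box per row). -/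
def IsVerticalStrip (μ ν : IntPartition) (r : ℕ) : Prop :=
  μ ≤ ν ∧ skewSize ν μ = r ∧ ∀ i, ν.part i ≤ μ.part i + 1

/-- `ν/μ` is a horizontal strip with `r` boxes (at most one box per column). -/
def IsHorizontalStrip (μ ν : IntPartition) (r : ℕ) : Prop :=
  μ ≤ ν ∧ skewSize ν μ = r ∧ ∀ i, ν.part (i + 1) ≤ μ.part i

/-- The conjugate partition. -/
def conj (μ : IntPartition) : IntPartition where
  part j := ((Finset.range μ.len).filter (fun i => j < μ.part i)).card
  antitone := by
    intro i j hij
    apply Finset.card_le_card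
    intro a ha
    simp only [Finset.mem_filter] at ha ⊢
    exact ⟨ha.1, lt_of_le_of_lt hij ha.2⟩
  finite := ⟨μ.part 0, by
    intro j hj
    simp only [Finset.card_eq_zero, Finset.filter_eq_empty_iff]
    intro a _
    have := μ.antitone 0 a (Nat.zero_le a)
    omega⟩

end IntPartition
/-- The field of rational functions in `n` variables over `ℚ`. -/
abbrev K (n : ℕ) := FractionRing (MvPolynomial (Fin n) ℚ)

/-- The variables `x_i`. -/
def X {n : ℕ} (i : Fin n) : K n :=
  algebraMap (MvPolynomial (Fin n) ℚ) (K n) (MvPolynomial.X i)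

/-- `N_β = det(x_i^{β_j} + x_i^{-β_j})`. -/
def N (n : ℕ) (β : Fin n → ℤ) : K n :=
  Matrix.det (Matrix.of fun i j : Fin n => X i ^ (β j) + X i ^ (-(β j)))

/-- The even orthogonal character
`oe_λ = 2·det(x_i^{λ_j+n-j} + x_i^{-(λ_j+n-j)}) / ((1+δ_{λ_n,0})·det(x_i^{n-j} + x_i^{-(n-j)}))`
(zero when `λ` has more than `n` parts). -/
def oe (n : ℕ) (μ : IntPartition) : K n :=
  if μ.len ≤ n then
    (2 * N n (fun j => (μ.part j : ℤ) + ((n : ℤ) - 1 - (j : ℕ)))) /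
      ((if μ.part (n - 1) = 0 then 2 else 1) * N n (fun j => (n : ℤ) - 1 - (j : ℕ)))
  else 0

/-- `p̄_r = Σ_i (x_i^r + x_i^{-r})`. -/
def pbar (n r : ℕ) : K n := ∑ i : Fin n, (X i ^ (r : ℤ) + X i ^ (-(r : ℤ)))

/-- The partition `(a, b, c)` (with `a ≥ b ≥ c`). -/
def P3 (a b c : ℕ) (hab : b ≤ a) (hbc : c ≤ b) : IntPartition :=
  ⟨fun i => if i = 0 then a else if i = 1 then b else if i = 2 then c else 0,
    by intro i j h; (try dsimp only); split_ifs <;> omega,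
    ⟨3, by intro i h; (try dsimp only); split_ifs <;> omega⟩⟩


/-! Multiplying the alternant `det (x_i^{β_j} + x_i^{-β_j})` by `p̄_r = ∑ (x_i^r + x_i^{-r})`
replaces, one column at a time, `β_j` by `β_j + r` plus `β_j - r`.  For `β = (4,2,0)` and `r = 3`
the six resulting alternants are brought back to strictly decreasing non-negative exponents by
a column transposition (a sign) and by `x^b + x^{-b} = x^{-b} + x^b` (evenness in each `β_j`);
dividing by the common denominator `N_{(2,1,0)}` gives the identity. -/

theorem Matrix.sum_det_updateCol_mul {n R : Type*} [Fintype n] [DecidableEq n] [CommRing R]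
    (A : Matrix n n R) (g : n → R) :
    ∑ j, (A.updateCol j fun i => g i * A i j).det = (∑ i, g i) * A.det := by
  have hprod (σ : Equiv.Perm n) (j : n) :
      ∏ k, (A.updateCol j fun i => g i * A i j) (σ k) k = g (σ j) * ∏ k, A (σ k) k := by
    rw [← Finset.mul_prod_erase _ _ (Finset.mem_univ j),
      ← Finset.mul_prod_erase _ _ (Finset.mem_univ j), Matrix.updateCol_self, mul_assoc]
    congr 2
    refine Finset.prod_congr rfl fun k hk => ?_
    rw [Matrix.updateCol_ne (Finset.ne_of_mem_erase hk)]
  simp only [Matrix.det_apply, hprod, Finset.mul_sum]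
  rw [Finset.sum_comm]
  refine Finset.sum_congr rfl fun σ _ => ?_
  rw [← Finset.smul_sum, ← Finset.sum_mul, Equiv.sum_comp σ g, mul_smul_comm]

lemma zpow_add_zpow_neg_mul {F : Type*} [Field F] {x : F} (hx : x ≠ 0) (r b : ℤ) :
    (x ^ r + x ^ (-r)) * (x ^ b + x ^ (-b)) =
      (x ^ (b + r) + x ^ (-(b + r))) + (x ^ (b - r) + x ^ (-(b - r))) := by
  simp only [add_mul, mul_add, ← zpow_add₀ hx]
  ring_nf

lemma X_ne_zero {n : ℕ} (i : Fin n) : X i ≠ 0 := by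
  simp only [X, ne_eq, map_eq_zero_iff _ (IsFractionRing.injective _ _)]
  exact MvPolynomial.X_ne_zero i

lemma N_update_eq_det_updateCol (n : ℕ) (β : Fin n → ℤ) (j : Fin n) (b : ℤ) :
    N n (Function.update β j b) =
      (Matrix.updateCol (Matrix.of fun i j : Fin n => X i ^ (β j) + X i ^ (-(β j))) j
        fun i => X i ^ b + X i ^ (-b)).det := by
  rw [N]
  congr 1
  ext i k
  rw [Matrix.updateCol_apply, Matrix.of_apply, Function.update_apply]
  split_ifs <;> rfl

theorem pbar_mul_N (n r : ℕ) (β : Fin n → ℤ) :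
    pbar n r * N n β = ∑ j, (N n (Function.update β j (β j + r)) +
      N n (Function.update β j (β j - r))) := by
  rw [pbar, N, ← Matrix.sum_det_updateCol_mul]
  refine Finset.sum_congr rfl fun j _ => ?_
  rw [N_update_eq_det_updateCol, N_update_eq_det_updateCol, ← Matrix.det_updateCol_add]
  congr 2
  ext i
  exact zpow_add_zpow_neg_mul (X_ne_zero i) _ _

theorem N_comp_perm (n : ℕ) (β : Fin n → ℤ) (σ : Equiv.Perm (Fin n)) :
    N n (β ∘ σ) = Equiv.Perm.sign σ * N n β := by
  rw [N, N, ← Matrix.det_permute']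
  rfl

theorem N_eq_neg_of_eq_comp_swap {n : ℕ} {β γ : Fin n → ℤ} {i j : Fin n} (hij : i ≠ j)
    (h : β = γ ∘ Equiv.swap i j) : N n β = -N n γ := by
  rw [h, N_comp_perm, Equiv.Perm.sign_swap hij]
  simp

theorem N_congr_abs {n : ℕ} {β γ : Fin n → ℤ} (h : ∀ j, |β j| = |γ j|) : N n β = N n γ := by
  have even (x : K n) (b : ℤ) : x ^ |b| + x ^ (-|b|) = x ^ b + x ^ (-b) := by
    rcases abs_choice b with hb | hb <;> rw [hb]
    rw [neg_neg, add_comm]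
  simp only [N, ← even _ (β _), ← even _ (γ _), h]

theorem pbar_three_mul_N_420 :
    pbar 3 3 * N 3 ![4, 2, 0] =
      N 3 ![7, 2, 0] - N 3 ![5, 4, 0] - 2 * N 3 ![4, 3, 2] - N 3 ![2, 1, 0] + N 3 ![4, 1, 0] := by
  have up₀ : N 3 (Function.update ![4, 2, 0] 0 (4 + (3 : ℕ))) = N 3 ![7, 2, 0] :=
    congrArg (N 3) (by decide)
  have down₀ : N 3 (Function.update ![4, 2, 0] 0 (4 - (3 : ℕ))) = -N 3 ![2, 1, 0] :=
    N_eq_neg_of_eq_comp_swap (i := 0) (j := 1) (by decide) (by decide)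
  have up₁ : N 3 (Function.update ![4, 2, 0] 1 (2 + (3 : ℕ))) = -N 3 ![5, 4, 0] :=
    N_eq_neg_of_eq_comp_swap (i := 0) (j := 1) (by decide) (by decide)
  have down₁ : N 3 (Function.update ![4, 2, 0] 1 (2 - (3 : ℕ))) = N 3 ![4, 1, 0] :=
    N_congr_abs (by decide)
  have up₂ : N 3 (Function.update ![4, 2, 0] 2 (0 + (3 : ℕ))) = -N 3 ![4, 3, 2] :=
    N_eq_neg_of_eq_comp_swap (i := 1) (j := 2) (by decide) (by decide)
  have down₂ : N 3 (Function.update ![4, 2, 0] 2 (0 - (3 : ℕ))) = -N 3 ![4, 3, 2] :=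
    (N_congr_abs (by decide)).trans up₂
  rw [pbar_mul_N, Fin.sum_univ_three]
  simp only [Matrix.cons_val_zero, Matrix.cons_val_one, Matrix.cons_val_two, Matrix.head_cons,
    Matrix.tail_cons]
  rw [up₀, down₀, up₁, down₁, up₂, down₂]
  ring

lemma P3_len_le (a b c : ℕ) (hab : b ≤ a) (hbc : c ≤ b) : (P3 a b c hab hbc).len ≤ 3 :=
  Nat.find_le (by simp [P3])

lemma oe_P3 (a b c : ℕ) (hab : b ≤ a) (hbc : c ≤ b) :
    oe 3 (P3 a b c hab hbc) =
      2 * N 3 ![(a : ℤ) + 2, (b : ℤ) + 1, (c : ℤ)] /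
        ((if c = 0 then 2 else 1) * N 3 ![2, 1, 0]) := by
  rw [oe, if_pos (P3_len_le a b c hab hbc)]
  congr 4
  · funext j
    fin_cases j <;> simp [P3]
  · funext j
    fin_cases j <;> rfl

/-- `p̄_3 · oe_{(2,1)} = oe_{(5,1)} - oe_{(3,3)} - oe_{(2,2,2)} - oe_∅ + oe_{(2)}`
in three variables. -/
theorem pbar3_oe21 :
    pbar 3 3 * oe 3 (P3 2 1 0 (by norm_num) (by norm_num)) =
      oe 3 (P3 5 1 0 (by norm_num) (by norm_num))
        - oe 3 (P3 3 3 0 (by norm_num) (by norm_num))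
        - oe 3 (P3 2 2 2 (by norm_num) (by norm_num))
        - oe 3 (P3 0 0 0 (by norm_num) (by norm_num))
        + oe 3 (P3 2 0 0 (by norm_num) (by norm_num)) := by
  norm_num [oe_P3]
  -- The identity is linear in `(N 3 ![2, 1, 0])⁻¹`, so its vanishing is harmless.
  linear_combination (N 3 ![2, 1, 0])⁻¹ * pbar_three_mul_N_420
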